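/- Define the interval score IS(L, U, y) = (U − L) + (2/α)·[(L − y)₊ + (y − U)₊] for L ≤ U, y ∈ ℝ, α ∈ (0,1). For a random variable Y with continuous strictly increasing CDF F, the expected interval score E[IS(L, U, Y)] is minimized over all pairs L ≤ U at L = F⁻¹(α/2), U = F⁻¹(1 − α/2). -/

import Mathlib

open MeasureTheory ProbabilityTheory Filter

/-- The interval score `IS(L, U, y) = (U − L) + (2/α)[(L − y)₊ + (y − U)₊]`. -/
noncomputable def intervalScore (α L U y : ℝ) : ℝ :=
  (U - L) + (2 / α) * (max (L - y) 0 + max (y - U) 0)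

lemma aux_lower (a b y : ℝ) :
    (b - a) * (if y < a then (1:ℝ) else 0) ≤ max (b - y) 0 - max (a - y) 0 := by
  rcases lt_or_ge y a with h | h
  · rw [if_pos h, max_eq_left (by linarith : (0:ℝ) ≤ a - y)]
    have := le_max_left (b - y) (0:ℝ)
    linarith
  · rw [if_neg (not_lt.2 h), max_eq_right (by linarith : a - y ≤ (0:ℝ))]
    have := le_max_right (b - y) (0:ℝ)
    linarith

lemma aux_upper (a b y : ℝ) :
    -(b - a) * (if a < y then (1:ℝ) else 0) ≤ max (y - b) 0 - max (y - a) 0 := by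
  rcases lt_or_ge a y with h | h
  · rw [if_pos h, max_eq_left (by linarith : (0:ℝ) ≤ y - a)]
    have := le_max_left (y - b) (0:ℝ)
    linarith
  · rw [if_neg (not_lt.2 h), max_eq_right (by linarith : y - a ≤ (0:ℝ))]
    have := le_max_right (y - b) (0:ℝ)
    linarith

theorem stmt_11 {Ω : Type*} [MeasurableSpace Ω] (μ : Measure Ω) [IsProbabilityMeasure μ]
    (Y : Ω → ℝ) (hY : Measurable Y) (hint : Integrable Y μ)
    (α : ℝ) (hα : α ∈ Set.Ioo (0 : ℝ) 1)
    (F : ℝ → ℝ) (hF : F = fun t => (μ.map Y (Set.Iic t)).toReal)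
    (hFc : Continuous F) (hFm : StrictMono F)
    (L U : ℝ) (hL : F L = α / 2) (hU : F U = 1 - α / 2) :
    ∀ L' U' : ℝ, L' ≤ U' →
      (∫ ω, intervalScore α L U (Y ω) ∂μ) ≤ ∫ ω, intervalScore α L' U' (Y ω) ∂μ := by
  intro L' U' hLU'
  obtain ⟨hα0, hα1⟩ := hα
  have hc : (0:ℝ) < 2 / α := by positivity
  set ν := μ.map Y with hν
  haveI : IsProbabilityMeasure ν := Measure.isProbabilityMeasure_map hY.aemeasurable
  have hFν : ∀ t, F t = (ν (Set.Iic t)).toReal := by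
    intro t; rw [hF]
  -- no atom at L
  have hatom : ν {L} = 0 := by
    have key : ∀ t ∈ Set.Iio L, (ν {L}).toReal ≤ F L - F t := by
      intro t ht
      have hsub : Set.Iic t ⊆ Set.Iic L := Set.Iic_subset_Iic.2 (le_of_lt ht)
      have h1 : ν {L} ≤ ν (Set.Iic L \ Set.Iic t) := by
        apply measure_mono
        intro x hx
        rcases hx with rfl
        simp only [Set.mem_Iio] at ht
        simp only [Set.mem_diff, Set.mem_Iic]
        exact ⟨le_refl _, not_le.2 ht⟩
      have h2 : ν (Set.Iic L \ Set.Iic t) = ν (Set.Iic L) - ν (Set.Iic t) :=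
        measure_diff hsub measurableSet_Iic.nullMeasurableSet (measure_ne_top _ _)
      have h3 : (ν {L}).toReal ≤ (ν (Set.Iic L \ Set.Iic t)).toReal :=
        ENNReal.toReal_mono (measure_ne_top _ _) h1
      rw [h2, ENNReal.toReal_sub_of_le (measure_mono hsub) (measure_ne_top _ _)] at h3
      rw [hFν, hFν]
      exact h3
    have htend : Tendsto (fun t => F L - F t) (nhdsWithin L (Set.Iio L)) (nhds 0) := by
      have h1 : Tendsto F (nhdsWithin L (Set.Iio L)) (nhds (F L)) :=
        (hFc.tendsto L).mono_left nhdsWithin_le_nhds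
      have h2 : Tendsto (fun t => F L - F t) (nhdsWithin L (Set.Iio L)) (nhds (F L - F L)) :=
        Tendsto.sub tendsto_const_nhds h1
      simpa using h2
    have hle : (ν {L}).toReal ≤ 0 :=
      ge_of_tendsto htend (eventually_nhdsWithin_of_forall key)
    have h0 : (ν {L}).toReal = 0 := le_antisymm hle ENNReal.toReal_nonneg
    rcases (ENNReal.toReal_eq_zero_iff _).1 h0 with h | h
    · exact h
    · exact absurd h (measure_ne_top _ _)
  -- probabilities
  have hmapIio : μ (Y ⁻¹' Set.Iio L) = ν (Set.Iio L) :=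
    (Measure.map_apply hY measurableSet_Iio).symm
  have hmapIoi : μ (Y ⁻¹' Set.Ioi U) = ν (Set.Ioi U) :=
    (Measure.map_apply hY measurableSet_Ioi).symm
  have pL : (μ (Y ⁻¹' Set.Iio L)).toReal = α / 2 := by
    rw [hmapIio, ← Set.Iic_diff_right, measure_diff_null hatom, ← hFν, hL]
  have pU : (μ (Y ⁻¹' Set.Ioi U)).toReal = α / 2 := by
    have : ν (Set.Ioi U) = 1 - ν (Set.Iic U) := by
      rw [← Set.compl_Iic, measure_compl measurableSet_Iic (measure_ne_top _ _), measure_univ]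
    rw [hmapIoi, this, ENNReal.toReal_sub_of_le prob_le_one ENNReal.one_ne_top,
      ENNReal.toReal_one, ← hFν, hU]
    ring
  -- integrability of interval scores
  have hIS : ∀ a b : ℝ, Integrable (fun ω => intervalScore α a b (Y ω)) μ := by
    intro a b
    unfold intervalScore
    apply (integrable_const (b - a)).add
    apply Integrable.const_mul
    exact ((integrable_const a).sub hint).pos_part.add ((hint.sub (integrable_const b)).pos_part)
  -- the correction function g
  have hs1 : MeasurableSet (Y ⁻¹' Set.Iio L) := hY measurableSet_Iio
  have hs2 : MeasurableSet (Y ⁻¹' Set.Ioi U) := hY measurableSet_Ioi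
  set g : Ω → ℝ := fun ω => ((U' - U) - (L' - L)) + (2 / α) *
    ((L' - L) * Set.indicator (Y ⁻¹' Set.Iio L) (fun _ => (1:ℝ)) ω
      - (U' - U) * Set.indicator (Y ⁻¹' Set.Ioi U) (fun _ => (1:ℝ)) ω) with hg
  have hI1 : Integrable (Set.indicator (Y ⁻¹' Set.Iio L) (fun _ => (1:ℝ))) μ :=
    (integrable_const (1:ℝ)).indicator hs1
  have hI2 : Integrable (Set.indicator (Y ⁻¹' Set.Ioi U) (fun _ => (1:ℝ))) μ :=
    (integrable_const (1:ℝ)).indicator hs2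
  have hgint2 : Integrable (fun ω => (L' - L) * Set.indicator (Y ⁻¹' Set.Iio L) (fun _ => (1:ℝ)) ω
      - (U' - U) * Set.indicator (Y ⁻¹' Set.Ioi U) (fun _ => (1:ℝ)) ω) μ :=
    (hI1.const_mul _).sub (hI2.const_mul _)
  have hgint3 : Integrable (fun ω => (2 / α) *
      ((L' - L) * Set.indicator (Y ⁻¹' Set.Iio L) (fun _ => (1:ℝ)) ω
      - (U' - U) * Set.indicator (Y ⁻¹' Set.Ioi U) (fun _ => (1:ℝ)) ω)) μ :=
    hgint2.const_mul _
  have hgint : Integrable g μ := by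
    rw [hg]
    exact (integrable_const _).add hgint3
  -- ∫ g = 0
  have e1 : ∫ ω, Set.indicator (Y ⁻¹' Set.Iio L) (fun _ => (1:ℝ)) ω ∂μ = α / 2 := by
    rw [integral_indicator_const (1:ℝ) hs1, measureReal_def, pL, smul_eq_mul, mul_one]
  have e2 : ∫ ω, Set.indicator (Y ⁻¹' Set.Ioi U) (fun _ => (1:ℝ)) ω ∂μ = α / 2 := by
    rw [integral_indicator_const (1:ℝ) hs2, measureReal_def, pU, smul_eq_mul, mul_one]
  have hgzero : ∫ ω, g ω ∂μ = 0 := by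
    have int2 : ∫ ω, ((L' - L) * Set.indicator (Y ⁻¹' Set.Iio L) (fun _ => (1:ℝ)) ω
        - (U' - U) * Set.indicator (Y ⁻¹' Set.Ioi U) (fun _ => (1:ℝ)) ω) ∂μ
        = (L' - L) * (α / 2) - (U' - U) * (α / 2) := by
      rw [integral_sub (hI1.const_mul _) (hI2.const_mul _), integral_const_mul,
        integral_const_mul, e1, e2]
    have hrw : ∫ ω, g ω ∂μ = ((U' - U) - (L' - L))
        + (2 / α) * ((L' - L) * (α / 2) - (U' - U) * (α / 2)) := by
      simp only [hg]
      rw [integral_add (integrable_const _) hgint3, integral_const, integral_const_mul, int2]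
      simp
    rw [hrw]
    field_simp
    ring
  -- pointwise inequality
  have hptwise : ∀ ω, intervalScore α L U (Y ω) + g ω ≤ intervalScore α L' U' (Y ω) := by
    intro ω
    have h1 := aux_lower L L' (Y ω)
    have h2 := aux_upper U U' (Y ω)
    have hsum := mul_le_mul_of_nonneg_left (add_le_add h1 h2) hc.le
    have i1 : Set.indicator (Y ⁻¹' Set.Iio L) (fun _ => (1:ℝ)) ω
        = if Y ω < L then 1 else 0 := by
      by_cases h : Y ω < L <;> simp [Set.indicator_apply, h]
    have i2 : Set.indicator (Y ⁻¹' Set.Ioi U) (fun _ => (1:ℝ)) ω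
        = if U < Y ω then 1 else 0 := by
      by_cases h : U < Y ω <;> simp [Set.indicator_apply, h]
    simp only [hg, i1, i2]
    unfold intervalScore
    ring_nf at hsum ⊢
    linarith [hsum]
  calc ∫ ω, intervalScore α L U (Y ω) ∂μ
      = ∫ ω, (intervalScore α L U (Y ω) + g ω) ∂μ := by
        rw [integral_add (hIS L U) hgint, hgzero, add_zero]
    _ ≤ ∫ ω, intervalScore α L' U' (Y ω) ∂μ :=
        integral_mono ((hIS L U).add hgint) (hIS L' U') hptwise
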